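/- arXiv:1308.2368 — 5 statements merged into one kernel-verified Lean document; each statement's English description precedes it below -/
import Mathlib

section
/- A graph G satisfies box(G) ≤ k if and only if there exists a family of k cointerval spanning subgraphs of the complement of G whose edge sets together cover all edges of the complement of G. -/
/-! A box representation in `ℝ^k` is the same as writing `G` as the intersection of `k` interval
graphs, one per coordinate; taking complements, `Gᶜ` is the union of `k` cointerval graphs. For
finite `G` the infimum defining the boxicity is attained: one coordinate per non-edge `ab` suffices,
since `Kₙ` minus the edge `ab` is an interval graph, and padding with copies of `⊤` makes
representability monotone in the dimension. -/

open SimpleGraph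

/-- `G` has a representation by axis-parallel boxes in `ℝ^k`: distinct vertices are
adjacent iff their boxes intersect. -/
def HasBoxRep {V : Type*} (G : SimpleGraph V) (k : ℕ) : Prop :=
  ∃ lo hi : V → Fin k → ℝ,
    ∀ u v : V, u ≠ v →
      (G.Adj u v ↔ ∀ i, max (lo u i) (lo v i) ≤ min (hi u i) (hi v i))

/-- The boxicity of a graph: the least `k` such that `G` has a box representation
in `ℝ^k` (0 for complete graphs). -/
noncomputable def boxicity {V : Type*} (G : SimpleGraph V) : ℕ :=
  sInf {k | HasBoxRep G k}

/-- An interval graph: an intersection graph of closed intervals on the real line. -/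
def IsIntervalGraph {V : Type*} (G : SimpleGraph V) : Prop := HasBoxRep G 1

/-- A cointerval graph: the complement is an interval graph. -/
def Cointerval {V : Type*} (G : SimpleGraph V) : Prop := IsIntervalGraph Gᶜ

/-- The generalized Mycielski graph `M_r(G)`: vertex `none` is the apex `z`,
`some (v, i)` is the copy `v_{i+1}` of `v` in level `i`.  Level `0` induces a copy of `G`,
consecutive levels are joined by `u_{i-1}v_i, v_{i-1}u_i` for `uv ∈ E(G)`, and `z`
is joined to all vertices of the top level `r-1`. -/
def genMycielski {V : Type*} (G : SimpleGraph V) (r : ℕ) :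
    SimpleGraph (Option (V × Fin r)) :=
  SimpleGraph.fromRel (fun a b =>
    match a, b with
    | some (u, i), some (v, j) =>
        (i = j ∧ (i : ℕ) = 0 ∧ G.Adj u v) ∨ ((j : ℕ) = (i : ℕ) + 1 ∧ G.Adj u v)
    | some (_, i), none => (i : ℕ) = r - 1
    | none, _ => False)

/-- A focal (universal) vertex: adjacent to all other vertices. -/
def IsFocal {V : Type*} (G : SimpleGraph V) (v : V) : Prop :=
  ∀ w, w ≠ v → G.Adj v w

/-- `G` with `n` additional universal vertices, i.e. the `n`-th focalization `G^{fⁿ}`. -/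
def addUniversal {V : Type*} (G : SimpleGraph V) (n : ℕ) :
    SimpleGraph (V ⊕ Fin n) :=
  SimpleGraph.fromRel (fun a b =>
    match a, b with
    | Sum.inl u, Sum.inl v => G.Adj u v
    | _, _ => True)

/-- The edge clique cover number: the minimum number of cliques covering all edges. -/
noncomputable def edgeCliqueCoverNumber {V : Type*} (G : SimpleGraph V) : ℕ :=
  sInf {k | ∃ f : Fin k → Set V, (∀ i, G.IsClique (f i)) ∧
    ∀ u v, G.Adj u v → ∃ i, u ∈ f i ∧ v ∈ f i}

/-- Disjoint union of two graphs. -/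
def disjUnionGraph {α β : Type*} (G : SimpleGraph α) (H : SimpleGraph β) :
    SimpleGraph (α ⊕ β) :=
  SimpleGraph.fromRel (fun a b =>
    match a, b with
    | Sum.inl u, Sum.inl v => G.Adj u v
    | Sum.inr u, Sum.inr v => H.Adj u v
    | _, _ => False)

/-- The complete multipartite graph with parts `V i`. -/
def completeMultipartite {ι : Type*} (V : ι → Type*) : SimpleGraph (Σ i, V i) where
  Adj a b := a.1 ≠ b.1
  symm := ⟨fun _ _ h => Ne.symm h⟩
  loopless := ⟨fun _ h => h rfl⟩


section

variable {V : Type*}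

def intervalGraph (lo hi : V → ℝ) : SimpleGraph V where
  Adj u v := u ≠ v ∧ max (lo u) (lo v) ≤ min (hi u) (hi v)
  symm := ⟨fun u v h => ⟨h.1.symm, by rw [max_comm, min_comm]; exact h.2⟩⟩
  loopless := ⟨fun _ h => h.1 rfl⟩

theorem hasBoxRep_iff_eq_iInf_intervalGraph {G : SimpleGraph V} {k : ℕ} :
    HasBoxRep G k ↔ ∃ lo hi : Fin k → V → ℝ, G = ⨅ i, intervalGraph (lo i) (hi i) := by
  constructor
  · rintro ⟨lo, hi, h⟩
    refine ⟨fun i v => lo v i, fun i v => hi v i, ?_⟩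
    ext u v
    simp only [iInf_adj, intervalGraph]
    exact ⟨fun hadj => ⟨fun i => ⟨hadj.ne, (h u v hadj.ne).1 hadj i⟩, hadj.ne⟩,
      fun hI => (h u v hI.2).2 fun i => (hI.1 i).2⟩
  · rintro ⟨lo, hi, rfl⟩
    refine ⟨fun v i => lo i v, fun v i => hi i v, fun u v huv => ?_⟩
    simp only [iInf_adj, intervalGraph]
    exact ⟨fun hI i => (hI.1 i).2, fun hI => ⟨fun i => ⟨huv, hI i⟩, huv⟩⟩

theorem isIntervalGraph_iff {G : SimpleGraph V} :
    IsIntervalGraph G ↔ ∃ lo hi : V → ℝ, G = intervalGraph lo hi := by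
  rw [IsIntervalGraph, hasBoxRep_iff_eq_iInf_intervalGraph]
  exact ⟨fun ⟨lo, hi, h⟩ => ⟨lo 0, hi 0, by rw [h, iInf_unique]; rfl⟩,
    fun ⟨lo, hi, h⟩ => ⟨fun _ => lo, fun _ => hi, by rw [h, iInf_const]⟩⟩

theorem hasBoxRep_iff_eq_iInf {G : SimpleGraph V} {k : ℕ} :
    HasBoxRep G k ↔
      ∃ H : Fin k → SimpleGraph V, (∀ i, IsIntervalGraph (H i)) ∧ G = ⨅ i, H i := by
  rw [hasBoxRep_iff_eq_iInf_intervalGraph]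
  constructor
  · rintro ⟨lo, hi, rfl⟩
    exact ⟨_, fun i => isIntervalGraph_iff.2 ⟨_, _, rfl⟩, rfl⟩
  · rintro ⟨H, hH, rfl⟩
    choose lo hi hH using fun i => isIntervalGraph_iff.1 (hH i)
    exact ⟨lo, hi, iInf_congr hH⟩

theorem hasBoxRep_of_eq_iInf {ι : Type*} [Finite ι] {G : SimpleGraph V} (H : ι → SimpleGraph V)
    (hH : ∀ i, IsIntervalGraph (H i)) (hG : G = ⨅ i, H i) : HasBoxRep G (Nat.card ι) :=
  hasBoxRep_iff_eq_iInf.2 ⟨H ∘ (Finite.equivFin ι).symm, fun _ => hH _,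
    hG.trans ((Finite.equivFin ι).symm.iInf_comp (g := H)).symm⟩

theorem isIntervalGraph_top : IsIntervalGraph (⊤ : SimpleGraph V) :=
  isIntervalGraph_iff.2 ⟨0, 0, by ext; simp [intervalGraph]⟩

theorem HasBoxRep.mono {G : SimpleGraph V} {k m : ℕ} (h : HasBoxRep G k) (hkm : k ≤ m) :
    HasBoxRep G m := by
  obtain ⟨d, rfl⟩ := Nat.exists_eq_add_of_le hkm
  obtain ⟨H, hH, rfl⟩ := hasBoxRep_iff_eq_iInf.1 h
  have := hasBoxRep_of_eq_iInf (G := ⨅ i, H i) (Sum.elim H fun _ : Fin d => ⊤)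
    (by rintro (i | i) <;> simp [hH, isIntervalGraph_top]) (by simp [iInf_sum])
  simpa using this

theorem isIntervalGraph_compl_edge [DecidableEq V] (a b : V) : IsIntervalGraph (edge a b)ᶜ := by
  obtain rfl | hab := eq_or_ne a b
  · simpa [edge_self_eq_bot] using isIntervalGraph_top
  refine isIntervalGraph_iff.2
    ⟨fun v => if v = b then 1 else 0, fun v => if v = a then 0 else 1, ?_⟩
  ext u v
  simp only [compl_adj, edge_adj, intervalGraph]
  split_ifs <;> simp_all

theorem exists_hasBoxRep [Finite V] (G : SimpleGraph V) : ∃ k, HasBoxRep G k := by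
  classical
  refine ⟨_, hasBoxRep_of_eq_iInf
    (fun p : {p : V × V // ¬G.Adj p.1 p.2} => (edge p.1.1 p.1.2)ᶜ)
    (fun _ => isIntervalGraph_compl_edge _ _) ?_⟩
  ext u v
  simp only [iInf_adj, compl_adj, edge_adj]
  constructor
  · intro h
    refine ⟨fun ⟨(a, b), hab⟩ => ⟨h.ne, ?_⟩, h.ne⟩
    rintro ⟨⟨rfl, rfl⟩ | ⟨rfl, rfl⟩, -⟩
    exacts [hab h, hab h.symm]
  · rintro ⟨h, huv⟩
    by_contra hG
    exact (h ⟨(u, v), hG⟩).2 ⟨Or.inl ⟨rfl, rfl⟩, huv⟩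

theorem boxicity_le_iff_hasBoxRep [Finite V] {G : SimpleGraph V} {k : ℕ} :
    boxicity G ≤ k ↔ HasBoxRep G k :=
  ⟨fun h => HasBoxRep.mono (Nat.sInf_mem (exists_hasBoxRep G)) h, fun h => Nat.sInf_le h⟩

theorem hasBoxRep_iff_compl_eq_iSup {G : SimpleGraph V} {k : ℕ} :
    HasBoxRep G k ↔
      ∃ f : Fin k → SimpleGraph V, (∀ i, Cointerval (f i)) ∧ Gᶜ = ⨆ i, f i := by
  rw [hasBoxRep_iff_eq_iInf]
  constructor
  · rintro ⟨H, hH, rfl⟩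
    exact ⟨fun i => (H i)ᶜ, fun i => by simpa [Cointerval] using hH i, compl_iInf⟩
  · rintro ⟨f, hf, hG⟩
    exact ⟨fun i => (f i)ᶜ, hf, by rw [← compl_compl G, hG, compl_iSup]⟩

theorem SimpleGraph.eq_iSup_iff_forall_le_and_exists_adj {ι : Type*} {G : SimpleGraph V}
    {f : ι → SimpleGraph V} :
    G = ⨆ i, f i ↔ (∀ i, f i ≤ G) ∧ ∀ u v, G.Adj u v → ∃ i, (f i).Adj u v := by
  constructor
  · rintro rfl
    exact ⟨le_iSup f, fun u v h => iSup_adj.1 h⟩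
  · rintro ⟨hf, hcov⟩
    exact le_antisymm (fun u v h => iSup_adj.2 (hcov u v h)) (iSup_le hf)

end

/-- Cozzens–Roberts: `box(G) ≤ k` iff `Gᶜ` has a cointerval edge
covering by `k` spanning subgraphs. -/
theorem boxicity_le_iff_cointerval_cover {V : Type*} [Fintype V]
    (G : SimpleGraph V) (k : ℕ) :
    boxicity G ≤ k ↔
      ∃ f : Fin k → SimpleGraph V,
        (∀ i, f i ≤ Gᶜ) ∧ (∀ i, Cointerval (f i)) ∧
        (∀ u v, Gᶜ.Adj u v → ∃ i, (f i).Adj u v) := by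
  rw [boxicity_le_iff_hasBoxRep, hasBoxRep_iff_compl_eq_iSup]
  refine exists_congr fun f => ?_
  rw [eq_iSup_iff_forall_le_and_exists_adj]
  tauto
end

section
/- Let G be a graph and let H_1, H_2 be induced subgraphs of the complement of G. If the distance between H_1 and H_2 in the complement of G is at least 2 (i.e., no vertex of H_1 is equal or adjacent in the complement to a vertex of H_2), then box(G) ≥ box(complement of H_1) + box(complement of H_2). -/
open SimpleGraph

/-!
Take a box representation of `G` in dimension `box(G)`. Every vertex of `S1` is adjacent in `G`
to every vertex of `S2`, so no coordinate separates two vertices of `S1` and also two vertices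
of `S2`: two intervals that both meet each of two disjoint intervals meet each other. Keeping only
the coordinates that separate vertices of `Sᵢ` represents `G[Sᵢ] = (Gᶜ[Sᵢ])ᶜ`, and these two sets
of coordinates are disjoint.
-/

open Finset

/-- `max a c ≤ min b d` says that `[a, b]` and `[c, d]` intersect. -/
lemma max_le_min_of_meet_separated {α : Type*} [LinearOrder α] {a b c d p q r s : α}
    (hsep : ¬ max a c ≤ min b d)
    (hpa : max p a ≤ min q b) (hpc : max p c ≤ min q d)
    (hra : max r a ≤ min s b) (hrc : max r c ≤ min s d) :
    max p r ≤ min q s := by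
  simp only [max_le_iff, le_min_iff, not_and_or, not_le] at *
  grind

lemma SimpleGraph.induce_compl {V : Type*} (G : SimpleGraph V) (s : Set V) :
    Gᶜ.induce s = (G.induce s)ᶜ := by
  ext u v
  simp [Subtype.ext_iff]

section BoxRep

variable {V : Type*} {k : ℕ}

def IsBoxRep (G : SimpleGraph V) (lo hi : V → Fin k → ℝ) : Prop :=
  ∀ u v, u ≠ v → (G.Adj u v ↔ ∀ i, max (lo u i) (lo v i) ≤ min (hi u i) (hi v i))

/-- Vertex `v` gets the interval `[1, 1]` in the coordinate of `v`, `[0, 1]` in the coordinates of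
its neighbours and `[0, 0]` in all other coordinates. -/
lemma hasBoxRep_card [Fintype V] (G : SimpleGraph V) : HasBoxRep G (Fintype.card V) := by
  classical
  let e := (Fintype.equivFin V).symm
  refine ⟨fun v i => if v = e i then 1 else 0,
    fun v i => if v = e i ∨ G.Adj v (e i) then 1 else 0,
    fun u v huv => ⟨fun hadj i => ?_, fun hmeet => ?_⟩⟩
  · by_cases hu : u = e i <;> by_cases hv : v = e i
    · exact absurd (hu.trans hv.symm) huv
    · subst hu; simp [hv, hadj.symm]
    · subst hv; simp [hu, hadj]
    · simp only [hu, hv, if_false, false_or, max_self, le_min_iff]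
      constructor <;> split_ifs <;> norm_num
  · have := hmeet (e.symm u)
    simp only [Equiv.apply_symm_apply, e] at this
    by_contra hnadj
    norm_num [huv.symm, G.adj_comm, hnadj] at this

open Classical in
noncomputable def separatingCoords (lo hi : V → Fin k → ℝ) (S : Set V) : Finset (Fin k) :=
  {i | ∃ u ∈ S, ∃ v ∈ S, ¬ max (lo u i) (lo v i) ≤ min (hi u i) (hi v i)}

variable {G : SimpleGraph V} {lo hi : V → Fin k → ℝ} {S S₁ S₂ : Set V} {i : Fin k}

lemma mem_separatingCoords :
    i ∈ separatingCoords lo hi S ↔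
      ∃ u ∈ S, ∃ v ∈ S, ¬ max (lo u i) (lo v i) ≤ min (hi u i) (hi v i) := by
  simp [separatingCoords]

lemma IsBoxRep.hasBoxRep_induce (hrep : IsBoxRep G lo hi) (S : Set V) :
    HasBoxRep (G.induce S) #(separatingCoords lo hi S) := by
  set A := separatingCoords lo hi S
  refine ⟨fun v j => lo v (A.equivFin.symm j), fun v j => hi v (A.equivFin.symm j),
    fun u v huv => (hrep u v (Subtype.coe_injective.ne huv)).trans ⟨fun hmeet j => hmeet _, ?_⟩⟩
  intro hmeet i
  by_contra hsep
  exact hsep (by simpa using hmeet (A.equivFin ⟨i, mem_separatingCoords.2 ⟨u, u.2, v, v.2, hsep⟩⟩))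

lemma IsBoxRep.disjoint_separatingCoords (hrep : IsBoxRep G lo hi)
    (hS : ∀ a ∈ S₁, ∀ b ∈ S₂, G.Adj a b) :
    Disjoint (separatingCoords lo hi S₁) (separatingCoords lo hi S₂) := by
  refine disjoint_left.2 fun i hi₁ hi₂ => ?_
  obtain ⟨u₁, hu₁, v₁, hv₁, hsep₁⟩ := mem_separatingCoords.1 hi₁
  obtain ⟨u₂, hu₂, v₂, hv₂, hsep₂⟩ := mem_separatingCoords.1 hi₂
  have hmeet : ∀ a ∈ S₁, ∀ b ∈ S₂, max (lo a i) (lo b i) ≤ min (hi a i) (hi b i) :=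
    fun a ha b hb => (hrep a b (hS a ha b hb).ne).1 (hS a ha b hb) i
  exact hsep₁ (max_le_min_of_meet_separated hsep₂ (hmeet u₁ hu₁ u₂ hu₂) (hmeet u₁ hu₁ v₂ hv₂)
    (hmeet v₁ hv₁ u₂ hu₂) (hmeet v₁ hv₁ v₂ hv₂))

lemma IsBoxRep.boxicity_induce_add_le (hrep : IsBoxRep G lo hi)
    (hS : ∀ a ∈ S₁, ∀ b ∈ S₂, G.Adj a b) :
    boxicity (G.induce S₁) + boxicity (G.induce S₂) ≤ k :=
  calc boxicity (G.induce S₁) + boxicity (G.induce S₂)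
      ≤ #(separatingCoords lo hi S₁) + #(separatingCoords lo hi S₂) :=
        add_le_add (Nat.sInf_le (hrep.hasBoxRep_induce S₁)) (Nat.sInf_le (hrep.hasBoxRep_induce S₂))
    _ = #(separatingCoords lo hi S₁ ∪ separatingCoords lo hi S₂) :=
        (card_union_of_disjoint (hrep.disjoint_separatingCoords hS)).symm
    _ ≤ k := (card_le_univ _).trans_eq (Fintype.card_fin k)

end BoxRep

/-- if the induced subgraphs of `Gᶜ` on `S1` and `S2` are at distance
at least 2 in `Gᶜ`, then `box(G) ≥ box(H₁ᶜ) + box(H₂ᶜ)`, where `Hᵢ = Gᶜ[Sᵢ]`. -/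
theorem boxicity_ge_add_of_far_subgraphs {V : Type*} [Fintype V]
    (G : SimpleGraph V) (S1 S2 : Set V)
    (h : ∀ v1 ∈ S1, ∀ v2 ∈ S2, v1 ≠ v2 ∧ ¬ Gᶜ.Adj v1 v2) :
    boxicity ((Gᶜ.induce S1)ᶜ) + boxicity ((Gᶜ.induce S2)ᶜ) ≤ boxicity G := by
  obtain ⟨lo, hi, hrep⟩ : ∃ lo hi, IsBoxRep G lo hi :=
    Nat.sInf_mem (s := {k | HasBoxRep G k}) ⟨_, hasBoxRep_card G⟩
  rw [induce_compl, compl_compl, induce_compl, compl_compl]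
  refine hrep.boxicity_induce_add_le fun a ha b hb => ?_
  obtain ⟨hab, hnadj⟩ := h a ha b hb
  simpa [hab] using hnadj
end

section
/- For any graph G with exactly l focal (universal) vertices, box(M_2(G)) ≤ θ(complement of G) + ⌈l/2⌉ + 1, where θ denotes the edge clique cover number. Moreover, if l is odd or l = 0, then box(M_2(G)) ≤ θ(complement of G) + ⌈l/2⌉. -/
/-!
A box representation in `ℝᵏ` is the same as `k` interval graphs, each containing `M₂(G)`, whose
intersection is `M₂(G)`. Every clique `S` of `Gᶜ` is independent in `G` and gives one such
interval graph, in which the copies of the vertices of `S` become pairwise distinct points: the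
level-0 copies to the left of the apex interval `[0, 1]`, the level-1 copies inside it. With a
clique cover of `Gᶜ` these separate every non-edge of `M₂(G)` except `z u₀`, `u₀ u₁` and `u₁ v₁`
for focal `u`, `v`. Pairing up the focal vertices, one interval graph per pair `{u, v}` separates
`u₀ u₁`, `v₀ v₁` and all `u₁ w₁`, `v₁ w₁`; one more separates `z` from level 0 and, when `l` is
odd, the two copies of the unpaired focal vertex. This uses `θ(Gᶜ) + ⌊l/2⌋ + 1` coordinates if
`l > 0` and `θ(Gᶜ)` if `l = 0`.
-/

open SimpleGraph

section BoxRep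

variable {W : Type*}

def IntervalsMeet (I : W → ℝ × ℝ) (a b : W) : Prop :=
  max (I a).1 (I b).1 ≤ min (I a).2 (I b).2

lemma intervalsMeet_comm {I : W → ℝ × ℝ} {a b : W} :
    IntervalsMeet I a b ↔ IntervalsMeet I b a := by
  rw [IntervalsMeet, IntervalsMeet, max_comm, min_comm]

lemma boxicity_le_card_of_intervals {ι : Type*} [Fintype ι] (H : SimpleGraph W)
    (I : ι → W → ℝ × ℝ) (hmeet : ∀ c a b, H.Adj a b → IntervalsMeet (I c) a b)
    (hsep : ∀ a b, a ≠ b → ¬ H.Adj a b → ∃ c, ¬ IntervalsMeet (I c) a b) :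
    boxicity H ≤ Fintype.card ι := by
  let e := Fintype.equivFin ι
  refine Nat.sInf_le ⟨fun a k => (I (e.symm k) a).1, fun a k => (I (e.symm k) a).2,
    fun a b hab => ⟨fun h k => hmeet _ a b h, fun h => ?_⟩⟩
  by_contra hn
  obtain ⟨c, hc⟩ := hsep a b hab hn
  exact hc (by simpa [IntervalsMeet] using h (e c))

end BoxRep

section EdgeCliqueCover

variable {V : Type*}

def IsEdgeCliqueCover (H : SimpleGraph V) {k : ℕ} (f : Fin k → Set V) : Prop :=
  (∀ i, H.IsClique (f i)) ∧ ∀ u v, H.Adj u v → ∃ i, u ∈ f i ∧ v ∈ f i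

lemma exists_isEdgeCliqueCover [Finite V] (H : SimpleGraph V) :
    ∃ f : Fin (edgeCliqueCoverNumber H) → Set V, IsEdgeCliqueCover H f := by
  classical
  refine Nat.sInf_mem (s := {k | ∃ f : Fin k → Set V, IsEdgeCliqueCover H f}) ?_
  have := Fintype.ofFinite V
  let e := (Fintype.equivFin (V × V)).symm
  refine ⟨_, fun k => if H.Adj (e k).1 (e k).2 then {(e k).1, (e k).2} else ∅, fun k => ?_,
    fun u v huv => ⟨e.symm (u, v), by simp [huv]⟩⟩
  dsimp only
  split_ifs with h
  · exact isClique_pair.2 fun _ => h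
  · exact isClique_empty

end EdgeCliqueCover

lemma exists_injective_mem_Ioo_zero_one (V : Type*) [Countable V] :
    ∃ ψ : V → ℝ, Function.Injective ψ ∧ ∀ v, ψ v ∈ Set.Ioo 0 1 := by
  obtain ⟨e, he⟩ := Countable.exists_injective_nat V
  refine ⟨fun v => 1 / ((e v : ℝ) + 2), fun u v h => he ?_, fun v => ⟨by positivity, ?_⟩⟩
  · dsimp only at h
    rwa [one_div, one_div, inv_inj, add_left_inj, Nat.cast_inj] at h
  · rw [div_lt_one (by positivity)]
    linarith [(e v).cast_nonneg (α := ℝ)]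

lemma Set.exists_subset_range_fin_of_ncard_eq {α : Type*} {s : Set α} [Finite s] {n : ℕ}
    (h : s.ncard = n) : ∃ g : Fin n → α, s ⊆ Set.range g := by
  subst h
  exact ⟨fun k => (Finite.equivFin s).symm k,
    fun x hx => ⟨_, congrArg Subtype.val ((Finite.equivFin s).symm_apply_apply ⟨x, hx⟩)⟩⟩

section Mycielski

variable {V : Type*} (G : SimpleGraph V)

@[simp] lemma genMycielski_two_adj_some_some {u v : V} {i j : Fin 2} :
    (genMycielski G 2).Adj (some (u, i)) (some (v, j)) ↔ (i = 0 ∨ j = 0) ∧ G.Adj u v := by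
  fin_cases i <;> fin_cases j <;> simp [genMycielski, fromRel_adj, adj_comm G v u]
  exact G.ne_of_adj

@[simp] lemma genMycielski_two_adj_none_some {v : V} {j : Fin 2} :
    (genMycielski G 2).Adj none (some (v, j)) ↔ j = 1 := by
  fin_cases j <;> simp [genMycielski, fromRel_adj]

@[simp] lemma genMycielski_two_adj_some_none {v : V} {j : Fin 2} :
    (genMycielski G 2).Adj (some (v, j)) none ↔ j = 1 := by
  rw [adj_comm, genMycielski_two_adj_none_some]

lemma forall_genMycielski_two_adj {P : Option (V × Fin 2) → Option (V × Fin 2) → Prop}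
    (hP : ∀ a b, P a b → P b a) (hapex : ∀ v, P none (some (v, 1)))
    (h00 : ∀ u v, G.Adj u v → P (some (u, 0)) (some (v, 0)))
    (h01 : ∀ u v, G.Adj u v → P (some (u, 0)) (some (v, 1))) :
    ∀ a b, (genMycielski G 2).Adj a b → P a b := by
  rintro (_ | ⟨u, i⟩) (_ | ⟨v, j⟩) h
  · exact absurd h (SimpleGraph.irrefl _)
  · obtain rfl : j = 1 := (genMycielski_two_adj_none_some G).1 h
    exact hapex v
  · obtain rfl : i = 1 := (genMycielski_two_adj_some_none G).1 h
    exact hP _ _ (hapex u)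
  · obtain ⟨hij, huv⟩ := (genMycielski_two_adj_some_some G).1 h
    fin_cases i <;> fin_cases j
    · exact h00 u v huv
    · exact h01 u v huv
    · exact hP _ _ (h01 v u huv.symm)
    · simp at hij

open Classical in
noncomputable def cliqueIntervals (ψ : V → ℝ) (S : Set V) : Option (V × Fin 2) → ℝ × ℝ
  | none => (0, 1)
  | some (v, 0) => if v ∈ S then (-1 - ψ v, -1 - ψ v) else (-2, 1)
  | some (v, 1) => if v ∈ S then (ψ v, ψ v) else (-2, 0)

lemma intervalsMeet_cliqueIntervals {ψ : V → ℝ} (hψ : ∀ v, ψ v ∈ Set.Icc 0 1) {S : Set V}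
    (hS : G.IsIndepSet S) {a b : Option (V × Fin 2)} (h : (genMycielski G 2).Adj a b) :
    IntervalsMeet (cliqueIntervals ψ S) a b := by
  refine forall_genMycielski_two_adj G (P := IntervalsMeet (cliqueIntervals ψ S))
    (fun _ _ => intervalsMeet_comm.1) (fun v => ?_) (fun u v huv => ?_) (fun u v huv => ?_)
    a b h <;>
  simp only [IntervalsMeet, cliqueIntervals, max_le_iff, le_min_iff] <;> split_ifs <;>
  first
  | exact absurd huv (hS ‹_› ‹_› huv.ne)
  | grind

lemma not_intervalsMeet_cliqueIntervals_of_mem {ψ : V → ℝ} (hinj : Function.Injective ψ)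
    (hψ : ∀ v, 0 < ψ v) {S : Set V} {u v : V} {i j : Fin 2} (hu : u ∈ S) (hv : v ∈ S)
    (hne : (u, i) ≠ (v, j)) :
    ¬ IntervalsMeet (cliqueIntervals ψ S) (some (u, i)) (some (v, j)) := by
  have hu0 := hψ u
  have hv0 := hψ v
  have huv : ψ u = ψ v → u = v := @hinj u v
  fin_cases i <;> fin_cases j <;>
    simp only [IntervalsMeet, cliqueIntervals, hu, hv, if_true, max_le_iff, le_min_iff] <;>
    grind

lemma not_intervalsMeet_cliqueIntervals_none {ψ : V → ℝ} {S : Set V} {u : V} (hψ : 0 < ψ u)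
    (hu : u ∈ S) : ¬ IntervalsMeet (cliqueIntervals ψ S) none (some (u, 0)) := by
  simp only [IntervalsMeet, cliqueIntervals, hu, if_true, max_le_iff, le_min_iff]
  grind

lemma not_intervalsMeet_cliqueIntervals_of_mem_of_notMem {ψ : V → ℝ} {S : Set V} {u v : V}
    (hψ : 0 < ψ u) (hu : u ∈ S) (hv : v ∉ S) :
    ¬ IntervalsMeet (cliqueIntervals ψ S) (some (u, 1)) (some (v, 1)) := by
  simp only [IntervalsMeet, cliqueIntervals, hu, hv, if_true, if_false, max_le_iff, le_min_iff]
  grind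

open Classical in
noncomputable def pairIntervals (u v : V) : Option (V × Fin 2) → ℝ × ℝ
  | none => (0, 3)
  | some (x, 0) => if x = u then (1, 3) else if x = v then (0, 2) else (0, 3)
  | some (x, 1) => if x = u then (0, 0) else if x = v then (3, 3) else (1, 2)

lemma intervalsMeet_pairIntervals (u v : V) {a b : Option (V × Fin 2)}
    (h : (genMycielski G 2).Adj a b) : IntervalsMeet (pairIntervals u v) a b := by
  refine forall_genMycielski_two_adj G (P := IntervalsMeet (pairIntervals u v))
    (fun _ _ => intervalsMeet_comm.1) (fun x => ?_) (fun x y hxy => ?_) (fun x y hxy => ?_)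
    a b h <;>
  simp only [IntervalsMeet, pairIntervals, max_le_iff, le_min_iff] <;> split_ifs <;> grind [Adj.ne]

lemma not_intervalsMeet_pairIntervals_level {u v x : V} (hx : x = u ∨ x = v) :
    ¬ IntervalsMeet (pairIntervals u v) (some (x, 0)) (some (x, 1)) := by
  simp only [IntervalsMeet, pairIntervals, max_le_iff, le_min_iff]
  split_ifs <;> grind

lemma not_intervalsMeet_pairIntervals_top {u v x y : V} (hx : x = u ∨ x = v) (hxy : x ≠ y) :
    ¬ IntervalsMeet (pairIntervals u v) (some (x, 1)) (some (y, 1)) := by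
  simp only [IntervalsMeet, pairIntervals, max_le_iff, le_min_iff]
  split_ifs <;> grind

open Classical in
noncomputable def apexIntervals (u : V) : Option (V × Fin 2) → ℝ × ℝ
  | none => (2, 2)
  | some (x, 0) => if x = u then (0, 0) else (0, 1)
  | some (x, 1) => if x = u then (1, 2) else (0, 2)

lemma intervalsMeet_apexIntervals (u : V) {a b : Option (V × Fin 2)}
    (h : (genMycielski G 2).Adj a b) : IntervalsMeet (apexIntervals u) a b := by
  refine forall_genMycielski_two_adj G (P := IntervalsMeet (apexIntervals u))
    (fun _ _ => intervalsMeet_comm.1) (fun x => ?_) (fun x y hxy => ?_) (fun x y hxy => ?_)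
    a b h <;>
  simp only [IntervalsMeet, apexIntervals, max_le_iff, le_min_iff] <;> split_ifs <;> grind [Adj.ne]

lemma not_intervalsMeet_apexIntervals_none (u x : V) :
    ¬ IntervalsMeet (apexIntervals u) none (some (x, 0)) := by
  simp only [IntervalsMeet, apexIntervals, max_le_iff, le_min_iff]
  split_ifs <;> norm_num

lemma not_intervalsMeet_apexIntervals_level (u : V) :
    ¬ IntervalsMeet (apexIntervals u) (some (u, 0)) (some (u, 1)) := by
  simp [IntervalsMeet, apexIntervals]

end Mycielski

section Reduction
variable {V : Type*} (G : SimpleGraph V)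

lemma IsEdgeCliqueCover.exists_mem_of_not_isFocal {t : ℕ} {f : Fin t → Set V}
    (hf : IsEdgeCliqueCover Gᶜ f) {u : V} (hu : ¬ IsFocal G u) : ∃ i, u ∈ f i := by
  simp only [IsFocal, not_forall] at hu
  obtain ⟨w, hwu, hw⟩ := hu
  exact (hf.2 u w ((compl_adj G u w).2 ⟨hwu.symm, hw⟩)).imp fun _ => And.left

lemma IsEdgeCliqueCover.notMem_of_adj {t : ℕ} {f : Fin t → Set V} (hf : IsEdgeCliqueCover Gᶜ f)
    {i : Fin t} {u v : V} (hu : u ∈ f i) (huv : G.Adj u v) : v ∉ f i := fun hv =>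
  (isClique_compl G).1 (hf.1 i) hu hv huv.ne huv

variable {ι : Type*} (I : ι → Option (V × Fin 2) → ℝ × ℝ) {ψ : V → ℝ} {t : ℕ}
  {f : Fin t → Set V}

lemma exists_not_intervalsMeet_none (hψ : ∀ v, 0 < ψ v) (hf : IsEdgeCliqueCover Gᶜ f)
    (hapex : ∀ u, IsFocal G u → ∃ c, ¬ IntervalsMeet (I c) none (some (u, 0))) (u : V) :
    (∃ i, ¬ IntervalsMeet (cliqueIntervals ψ (f i)) none (some (u, 0))) ∨
      ∃ c, ¬ IntervalsMeet (I c) none (some (u, 0)) := by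
  by_cases hu : IsFocal G u
  · exact .inr (hapex u hu)
  · exact .inl ((hf.exists_mem_of_not_isFocal G hu).imp fun i hi =>
      not_intervalsMeet_cliqueIntervals_none (hψ u) hi)

lemma exists_not_intervalsMeet_of_not_adj (hinj : Function.Injective ψ) (hψ : ∀ v, 0 < ψ v)
    (hf : IsEdgeCliqueCover Gᶜ f)
    (hapex : ∀ u, IsFocal G u → ∃ c, ¬ IntervalsMeet (I c) none (some (u, 0)))
    (hlevel : ∀ u, IsFocal G u → ∃ c, ¬ IntervalsMeet (I c) (some (u, 0)) (some (u, 1)))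
    (htop : ∀ u v, IsFocal G u → IsFocal G v → u ≠ v →
      ∃ c, ¬ IntervalsMeet (I c) (some (u, 1)) (some (v, 1)))
    {a b : Option (V × Fin 2)} (hab : a ≠ b) (h : ¬ (genMycielski G 2).Adj a b) :
    (∃ i, ¬ IntervalsMeet (cliqueIntervals ψ (f i)) a b) ∨ ∃ c, ¬ IntervalsMeet (I c) a b := by
  rcases a with _ | ⟨u, i⟩ <;> rcases b with _ | ⟨v, j⟩
  · exact absurd rfl hab
  · obtain rfl : j = 0 := by fin_cases j <;> simp_all
    exact exists_not_intervalsMeet_none G I hψ hf hapex v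
  · obtain rfl : i = 0 := by fin_cases i <;> simp_all
    simpa only [intervalsMeet_comm] using exists_not_intervalsMeet_none G I hψ hf hapex u
  by_cases hG : G.Adj u v
  · obtain ⟨rfl, rfl⟩ : i = 1 ∧ j = 1 := by fin_cases i <;> fin_cases j <;> simp_all
    by_cases hu : IsFocal G u
    · by_cases hv : IsFocal G v
      · exact .inr (htop u v hu hv hG.ne)
      · obtain ⟨k, hk⟩ := hf.exists_mem_of_not_isFocal G hv
        refine .inl ⟨k, ?_⟩
        rw [intervalsMeet_comm]
        exact not_intervalsMeet_cliqueIntervals_of_mem_of_notMem (hψ v) hk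
          (hf.notMem_of_adj G hk hG.symm)
    · obtain ⟨k, hk⟩ := hf.exists_mem_of_not_isFocal G hu
      exact .inl ⟨k, not_intervalsMeet_cliqueIntervals_of_mem_of_notMem (hψ u) hk
        (hf.notMem_of_adj G hk hG)⟩
  by_cases huv : u = v
  · subst huv
    by_cases hu : IsFocal G u
    · right
      fin_cases i <;> fin_cases j
      · exact absurd rfl hab
      · exact hlevel u hu
      · exact (hlevel u hu).imp fun c hc => by rwa [intervalsMeet_comm] at hc
      · exact absurd rfl hab
    · obtain ⟨k, hk⟩ := hf.exists_mem_of_not_isFocal G hu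
      exact .inl ⟨k, not_intervalsMeet_cliqueIntervals_of_mem hinj hψ hk hk (by simpa using hab)⟩
  · obtain ⟨k, hu, hv⟩ := hf.2 u v ((compl_adj G u v).2 ⟨huv, hG⟩)
    exact .inl ⟨k, not_intervalsMeet_cliqueIntervals_of_mem hinj hψ hu hv (by simp [huv])⟩

theorem boxicity_genMycielski_two_le [Finite V] [Fintype ι]
    (hmeet : ∀ c a b, (genMycielski G 2).Adj a b → IntervalsMeet (I c) a b)
    (hapex : ∀ u, IsFocal G u → ∃ c, ¬ IntervalsMeet (I c) none (some (u, 0)))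
    (hlevel : ∀ u, IsFocal G u → ∃ c, ¬ IntervalsMeet (I c) (some (u, 0)) (some (u, 1)))
    (htop : ∀ u v, IsFocal G u → IsFocal G v → u ≠ v →
      ∃ c, ¬ IntervalsMeet (I c) (some (u, 1)) (some (v, 1))) :
    boxicity (genMycielski G 2) ≤ edgeCliqueCoverNumber Gᶜ + Fintype.card ι := by
  obtain ⟨ψ, hinj, hψ⟩ := exists_injective_mem_Ioo_zero_one V
  obtain ⟨f, hf⟩ := exists_isEdgeCliqueCover Gᶜ
  rw [← Fintype.card_fin (edgeCliqueCoverNumber Gᶜ), ← Fintype.card_sum]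
  refine boxicity_le_card_of_intervals _ (Sum.elim (fun i => cliqueIntervals ψ (f i)) I) ?_ ?_
  · rintro (i | c) a b h
    · exact intervalsMeet_cliqueIntervals G (fun v => Set.Ioo_subset_Icc_self (hψ v))
        ((isClique_compl G).1 (hf.1 i)) h
    · exact hmeet c a b h
  · intro a b hab h
    simpa only [Sum.exists, Sum.elim_inl, Sum.elim_inr] using
      exists_not_intervalsMeet_of_not_adj G I hinj (fun v => (hψ v).1) hf hapex hlevel htop hab h

end Reduction

section Focal
variable {V : Type*} (G : SimpleGraph V)

/-- The focal vertices, enumerated by `g`, are paired as `(g (2k), g (2k+1))`; if `l` is odd,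
`g (l - 1)` is left over and the apex coordinate `none` also separates its two copies. -/
noncomputable def focalIntervals {l : ℕ} (g : Fin l → V) (hl : 0 < l) :
    Option (Fin (l / 2)) → Option (V × Fin 2) → ℝ × ℝ
  | none => apexIntervals (g ⟨l - 1, by omega⟩)
  | some k => pairIntervals (g ⟨2 * k, by omega⟩) (g ⟨2 * k + 1, by omega⟩)

variable {l : ℕ} (g : Fin l → V) (hl : 0 < l)

lemma intervalsMeet_focalIntervals (c : Option (Fin (l / 2))) {a b : Option (V × Fin 2)}
    (h : (genMycielski G 2).Adj a b) : IntervalsMeet (focalIntervals g hl c) a b := by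
  cases c
  · exact intervalsMeet_apexIntervals G _ h
  · exact intervalsMeet_pairIntervals G _ _ h

lemma apply_eq_or_apply_eq_of_lt_two_mul {k : Fin l} (hk : (k : ℕ) < 2 * (l / 2)) :
    g k = g ⟨2 * (k / 2), by omega⟩ ∨ g k = g ⟨2 * (k / 2) + 1, by omega⟩ := by
  have : (k : ℕ) = 2 * (k / 2) ∨ (k : ℕ) = 2 * (k / 2) + 1 := by omega
  exact this.imp (fun h => congrArg g (Fin.ext h)) (fun h => congrArg g (Fin.ext h))

lemma exists_not_intervalsMeet_focalIntervals_level (k : Fin l) :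
    ∃ c, ¬ IntervalsMeet (focalIntervals g hl c) (some (g k, 0)) (some (g k, 1)) := by
  by_cases hk : (k : ℕ) < 2 * (l / 2)
  · exact ⟨some ⟨k / 2, by omega⟩,
      not_intervalsMeet_pairIntervals_level (apply_eq_or_apply_eq_of_lt_two_mul g hk)⟩
  · rw [show k = ⟨l - 1, by omega⟩ from Fin.ext (show (k : ℕ) = l - 1 by omega)]
    exact ⟨none, not_intervalsMeet_apexIntervals_level _⟩

lemma exists_not_intervalsMeet_focalIntervals_top {k : Fin l} (hk : (k : ℕ) < 2 * (l / 2))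
    {y : V} (hy : g k ≠ y) :
    ∃ c, ¬ IntervalsMeet (focalIntervals g hl c) (some (g k, 1)) (some (y, 1)) :=
  ⟨some ⟨k / 2, by omega⟩,
    not_intervalsMeet_pairIntervals_top (apply_eq_or_apply_eq_of_lt_two_mul g hk) hy⟩

end Focal

theorem boxicity_genMycielski_two_le_of_subset_range {V : Type*} [Finite V] (G : SimpleGraph V)
    {l : ℕ} (g : Fin l → V) (hl : 0 < l) (hg : {v | IsFocal G v} ⊆ Set.range g) :
    boxicity (genMycielski G 2) ≤ edgeCliqueCoverNumber Gᶜ + (l / 2 + 1) := by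
  have h := boxicity_genMycielski_two_le G (focalIntervals g hl)
    (fun c _ _ => intervalsMeet_focalIntervals G g hl c)
    (fun u _ => ⟨none, not_intervalsMeet_apexIntervals_none _ u⟩) ?_ ?_
  · simpa only [Fintype.card_option, Fintype.card_fin] using h
  · rintro u hu
    obtain ⟨k, rfl⟩ := hg hu
    exact exists_not_intervalsMeet_focalIntervals_level g hl k
  · rintro u v hu hv huv
    obtain ⟨k, rfl⟩ := hg hu
    obtain ⟨k', rfl⟩ := hg hv
    by_cases hk : (k : ℕ) < 2 * (l / 2)
    · exact exists_not_intervalsMeet_focalIntervals_top g hl hk huv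
    · have hk' : (k' : ℕ) < 2 * (l / 2) := by
        by_contra hk'
        exact huv (congrArg g (Fin.ext (by omega)))
      simpa only [intervalsMeet_comm] using
        exists_not_intervalsMeet_focalIntervals_top g hl hk' huv.symm

theorem boxicity_genMycielski_two_le_of_forall_not_isFocal {V : Type*} [Finite V]
    (G : SimpleGraph V) (h : ∀ v, ¬ IsFocal G v) :
    boxicity (genMycielski G 2) ≤ edgeCliqueCoverNumber Gᶜ := by
  simpa using boxicity_genMycielski_two_le G (ι := Empty) (fun c => c.elim) (fun c => c.elim)
    (fun u hu => (h u hu).elim) (fun u hu => (h u hu).elim) (fun u _ hu => (h u hu).elim)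

/-- for `G` with exactly `l` focal vertices,
`box(M₂(G)) ≤ θ(Gᶜ) + ⌈l/2⌉ + 1`, and `box(M₂(G)) ≤ θ(Gᶜ) + ⌈l/2⌉` if `l` is odd or zero. -/
theorem boxicity_mycielski_le {V : Type*} [Fintype V] (G : SimpleGraph V) (l : ℕ)
    (hl : {v | IsFocal G v}.ncard = l) :
    boxicity (genMycielski G 2) ≤ edgeCliqueCoverNumber Gᶜ + (l + 1) / 2 + 1 ∧
    ((Odd l ∨ l = 0) →
      boxicity (genMycielski G 2) ≤ edgeCliqueCoverNumber Gᶜ + (l + 1) / 2) := by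
  obtain ⟨g, hg⟩ := Set.exists_subset_range_fin_of_ncard_eq hl
  rcases Nat.eq_zero_or_pos l with rfl | hl0
  · have h := boxicity_genMycielski_two_le_of_forall_not_isFocal G fun v hv =>
      (hg hv).choose.elim0
    exact ⟨by omega, fun _ => by omega⟩
  · have h := boxicity_genMycielski_two_le_of_subset_range G g hl0 hg
    refine ⟨by omega, ?_⟩
    rintro (⟨k, rfl⟩ | rfl) <;> omega
end

section
/- For any graph G, the chromatic number of the Mycielski graph satisfies χ(M_2(G)) = χ(G) + 1. -/
open SimpleGraph

/-! An `n`-colouring of `G` extends to `M₂(G)` by giving every copy of `v` the colour of `v`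
and the apex a fresh colour. Conversely, given an `(n+1)`-colouring of `M₂(G)`, recolour every
level-0 vertex that carries the apex colour by the colour of its level-1 twin. The twin is adjacent
to the apex and to all level-0 neighbours of `v`, so the result is a proper colouring of `G`
avoiding the apex colour. -/

namespace SimpleGraph

variable {V α : Type*} {G : SimpleGraph V} {r : ℕ} {u v : V}

lemma Adj.of_genMycielski {i j : Fin r}
    (h : (genMycielski G r).Adj (some (u, i)) (some (v, j))) : G.Adj u v := by
  rw [genMycielski, fromRel_adj] at h
  obtain ⟨-, (⟨-, -, huv⟩ | ⟨-, huv⟩) | (⟨-, -, hvu⟩ | ⟨-, hvu⟩)⟩ := h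
  exacts [huv, huv, hvu.symm, hvu.symm]

lemma genMycielski_adj_none {i : Fin r} :
    (genMycielski G r).Adj (some (v, i)) none ↔ (i : ℕ) = r - 1 := by
  simp [genMycielski, fromRel_adj]

lemma Adj.genMycielski_zero [NeZero r] (h : G.Adj u v) :
    (genMycielski G r).Adj (some (u, 0)) (some (v, 0)) := by
  rw [genMycielski, fromRel_adj]
  exact ⟨by simp [h.ne], Or.inl (Or.inl ⟨rfl, by simp, h⟩)⟩

lemma Adj.genMycielski_succ {i j : Fin r} (h : G.Adj u v) (hij : (j : ℕ) = i + 1) :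
    (genMycielski G r).Adj (some (u, i)) (some (v, j)) := by
  rw [genMycielski, fromRel_adj]
  exact ⟨by simp [h.ne], Or.inl (Or.inr ⟨hij, h⟩)⟩

lemma Colorable.genMycielski {n : ℕ} (h : G.Colorable n) (r : ℕ) :
    (genMycielski G r).Colorable (n + 1) := by
  obtain ⟨c⟩ := h
  refine (Coloring.mk (fun x : Option (V × Fin r) => x.map fun p => c p.1)
    fun {x y} hxy => ?_).colorable.mono (by simp)
  match x, y, hxy with
  | some (u, _), some (v, _), h => simpa using c.valid h.of_genMycielski
  | some _, none, _ => simp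
  | none, some _, _ => simp

def Coloring.ofGenMycielskiTwo [DecidableEq α] (c : (genMycielski G 2).Coloring α) :
    G.Coloring {a : α // a ≠ c none} :=
  Coloring.mk
    (fun v => if h : c (some (v, 0)) = c none then
        ⟨c (some (v, 1)), c.valid (genMycielski_adj_none.2 rfl)⟩
      else ⟨c (some (v, 0)), h⟩)
    fun {u v} huv => by
      have h00 := c.valid huv.genMycielski_zero
      have h01 := c.valid (huv.genMycielski_succ (i := 0) (j := 1) rfl)
      have h10 := c.valid (huv.symm.genMycielski_succ (i := 0) (j := 1) rfl)
      split_ifs with hu hv hv <;> simp only [ne_eq, Subtype.mk.injEq]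
      · exact fun _ => h00 (hu.trans hv.symm)
      · exact fun h => h10 h.symm
      · exact h01
      · exact h00

lemma colorable_of_genMycielski_two {n : ℕ} (h : (genMycielski G 2).Colorable (n + 1)) :
    G.Colorable n := by
  classical
  obtain ⟨c⟩ := h
  simpa [Fintype.card_subtype_compl] using c.ofGenMycielskiTwo.colorable

lemma chromaticNumber_eq_add_one_of_colorable_succ_iff {W : Type*} [Nonempty W]
    {H : SimpleGraph W} (h : ∀ n, H.Colorable (n + 1) ↔ G.Colorable n) :
    H.chromaticNumber = G.chromaticNumber + 1 := by
  refine le_antisymm ?_ (le_iInf₂ fun m (hm : H.Colorable m) => ?_)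
  · cases hχ : G.chromaticNumber using ENat.recTopCoe with
    | top => simp
    | coe m =>
      have hG : G.Colorable m := chromaticNumber_le_iff_colorable.1 hχ.le
      exact_mod_cast ((h m).2 hG).chromaticNumber_le
  · obtain _ | k := m
    · exact (not_isEmpty_of_nonempty W (colorable_zero_iff.1 hm)).elim
    · exact_mod_cast add_le_add_left ((h k).1 hm).chromaticNumber_le 1

end SimpleGraph

theorem chromaticNumber_mycielski_general {V : Type*} (G : SimpleGraph V) :
    (genMycielski G 2).chromaticNumber = G.chromaticNumber + 1 :=
  chromaticNumber_eq_add_one_of_colorable_succ_iff fun _ =>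
    ⟨colorable_of_genMycielski_two, fun h => h.genMycielski 2⟩

/-- Mycielski: `χ(M₂(G)) = χ(G) + 1`. -/
theorem chromaticNumber_mycielski {V : Type*} [Fintype V] (G : SimpleGraph V) :
    (genMycielski G 2).chromaticNumber = G.chromaticNumber + 1 :=
  chromaticNumber_mycielski_general G
end

section
/- If box(G) = n/2 − s for a graph G with n vertices and s ≥ 0, then the chromatic number satisfies χ(G) ≥ n/(2s + 2). -/
open SimpleGraph

/-!
Let `I` be a maximum independent set. A box representation in `ℝ^k` amounts to `k` interval
supergraphs of `G` such that every non-edge of `G` is a non-edge of one of them. Pair off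
non-adjacent vertices outside `I` greedily: one interval supergraph separates all non-edges at
both vertices of a pair, by turning them into the points `0` and `2`. What remains outside `I` is
a clique, whose non-edges all go to `I`; it is cut into groups of at most two vertices `a, b`, and
one interval supergraph per group turns `I` into distinct points sorted by their adjacency to `a`
and `b`. This gives `2 box(G) + α(G) ≤ n + 2`, hence `α(G) ≤ 2s + 2`, and `n ≤ χ(G) α(G)` since
colour classes are independent.
-/

namespace SimpleGraph

variable {V : Type*}

structure IntervalSupergraph (G : SimpleGraph V) where
  lo : V → ℕ
  hi : V → ℕ
  meet_of_adj : ∀ ⦃u v⦄, G.Adj u v → max (lo u) (lo v) ≤ min (hi u) (hi v)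

namespace IntervalSupergraph

variable {G : SimpleGraph V}

def Separates (F : G.IntervalSupergraph) (u v : V) : Prop :=
  min (F.hi u) (F.hi v) < max (F.lo u) (F.lo v)

theorem Separates.symm {F : G.IntervalSupergraph} {u v : V} (h : F.Separates u v) :
    F.Separates v u := by
  rwa [Separates, min_comm, max_comm]

end IntervalSupergraph

def NonEdgesSeparable (G : SimpleGraph V) (S : Set V) (k : ℕ) : Prop :=
  ∃ F : Fin k → G.IntervalSupergraph,
    ∀ u ∈ S, ∀ v ∈ S, u ≠ v → ¬G.Adj u v → ∃ i, (F i).Separates u v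

variable {G : SimpleGraph V}

theorem hasBoxRep_of_nonEdgesSeparable {k : ℕ} (h : G.NonEdgesSeparable Set.univ k) :
    HasBoxRep G k := by
  obtain ⟨F, hF⟩ := h
  refine ⟨fun v i => (F i).lo v, fun v i => (F i).hi v, fun u v huv => ⟨fun hadj i => ?_, ?_⟩⟩
  · dsimp only
    exact_mod_cast (F i).meet_of_adj hadj
  · contrapose!
    intro hnadj
    obtain ⟨i, hi⟩ := hF u trivial v trivial huv hnadj
    exact ⟨i, by exact_mod_cast hi⟩

theorem NonEdgesSeparable.cons {S T : Set V} {k : ℕ} (h : G.NonEdgesSeparable S k)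
    (F : G.IntervalSupergraph)
    (hF : ∀ u ∈ T, ∀ v ∈ T, u ∉ S → u ≠ v → ¬G.Adj u v → F.Separates u v) :
    G.NonEdgesSeparable T (k + 1) := by
  obtain ⟨Fs, hFs⟩ := h
  refine ⟨Fin.cons F Fs, fun u hu v hv huv hnadj => ?_⟩
  by_cases huS : u ∈ S
  · by_cases hvS : v ∈ S
    · obtain ⟨i, hi⟩ := hFs u huS v hvS huv hnadj
      exact ⟨i.succ, by simpa using hi⟩
    · exact ⟨0, (hF v hv u hu hvS huv.symm fun h => hnadj h.symm).symm⟩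
  · exact ⟨0, hF u hu v hv huS huv hnadj⟩

namespace IntervalSupergraph

open scoped Classical

/-- The vertices `u` and `v` become the points `0` and `2`; every other vertex gets an interval
inside `[0, 2]` containing `1`, reaching `0` or `2` exactly when it is adjacent to `u` or `v`. -/
noncomputable def ofNonAdj {u v : V} (h : ¬G.Adj u v) : G.IntervalSupergraph where
  lo x := if x = u then 0 else if x = v then 2 else if G.Adj x u then 0 else 1
  hi x := if x = u then 0 else if x = v then 2 else if G.Adj x v then 2 else 1
  meet_of_adj x y hxy := by
    split_ifs <;> subst_vars <;> simp_all [G.adj_comm]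

theorem ofNonAdj_separates {u v x y : V} (h : ¬G.Adj u v) (hxy : x ≠ y) (hnadj : ¬G.Adj x y)
    (hx : x = u ∨ x = v) : (ofNonAdj h).Separates x y := by
  rcases hx with rfl | rfl <;>
  · simp only [Separates, ofNonAdj]
    split_ifs <;> subst_vars <;> simp_all [G.adj_comm]

end IntervalSupergraph

section IndepSet

open scoped Classical

variable {m : ℕ} (e : V ↪ Fin m) (A B : Set V)

variable (G) in
noncomputable def blockIndex (z : V) : ℕ :=
  if ∀ a ∈ A, G.Adj z a then (if ∀ b ∈ B, G.Adj z b then 2 else 1)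
  else (if ∀ b ∈ B, G.Adj z b then 3 else 0)

variable (G) in
noncomputable def blockPos (z : V) : ℕ := G.blockIndex A B z * (m + 1) + e z

variable {e A B}

theorem blockPos_le (z : V) : G.blockPos e A B z ≤ 4 * m + 3 := by
  have := (e z).isLt
  unfold blockPos blockIndex
  split_ifs <;> omega

theorem blockPos_mem_iff_forall_adj_left (z : V) :
    (m + 1 ≤ G.blockPos e A B z ∧ G.blockPos e A B z ≤ 3 * m + 2) ↔ ∀ a ∈ A, G.Adj z a := by
  have := (e z).isLt
  unfold blockPos blockIndex
  split_ifs <;>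
    first | exact iff_of_true (by omega) ‹_› | exact iff_of_false (by omega) ‹_›

theorem blockPos_mem_iff_forall_adj_right (z : V) :
    (2 * m + 2 ≤ G.blockPos e A B z ∧ G.blockPos e A B z ≤ 4 * m + 3) ↔ ∀ b ∈ B, G.Adj z b := by
  have := (e z).isLt
  unfold blockPos blockIndex
  split_ifs <;>
    first | exact iff_of_true (by omega) ‹_› | exact iff_of_false (by omega) ‹_›

theorem blockPos_injective : Function.Injective (G.blockPos e A B) := by
  intro z w h
  have hmod := congrArg (· % (m + 1)) h
  simp only [blockPos, Nat.mul_add_mod_of_lt (Nat.lt_succ_of_lt (e _).isLt)] at hmod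
  exact e.injective (Fin.ext hmod)

variable (e A B) {I : Set V}

/-- The vertices of `I` become distinct points, sorted into four blocks according to their
adjacency to `A` and to `B`; the vertices of `A` cover the two middle blocks, those of `B` the
two upper ones, and all other vertices everything. -/
noncomputable def IntervalSupergraph.ofIndepSet (hI : G.IsIndepSet I) (hA : A.Subsingleton)
    (hB : B.Subsingleton) : G.IntervalSupergraph where
  lo x := if x ∈ I then G.blockPos e A B x
    else if x ∈ A then m + 1 else if x ∈ B then 2 * m + 2 else 0
  hi x := if x ∈ I then G.blockPos e A B x else if x ∈ A then 3 * m + 2 else 4 * m + 3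
  meet_of_adj := by
    have meet_of_mem : ∀ ⦃x y⦄, G.Adj x y → x ∈ I → y ∉ I →
        (if y ∈ A then m + 1 else if y ∈ B then 2 * m + 2 else 0) ≤ G.blockPos e A B x ∧
          G.blockPos e A B x ≤ if y ∈ A then 3 * m + 2 else 4 * m + 3 := by
      intro x y hxy hx hy
      have := blockPos_le (G := G) (e := e) (A := A) (B := B) x
      split_ifs with hyA hyB
      · exact (blockPos_mem_iff_forall_adj_left x).2 fun a ha => hA ha hyA ▸ hxy
      · exact (blockPos_mem_iff_forall_adj_right x).2 fun b hb => hB hb hyB ▸ hxy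
      · omega
    intro x y hxy
    by_cases hx : x ∈ I <;> by_cases hy : y ∈ I
    · exact absurd hxy (hI hx hy hxy.ne)
    · have := meet_of_mem hxy hx hy
      simp only [hx, hy, ↓reduceIte]
      split_ifs at this ⊢ <;> omega
    · have := meet_of_mem hxy.symm hy hx
      simp only [hx, hy, ↓reduceIte]
      split_ifs at this ⊢ <;> omega
    · simp only [hx, hy, ↓reduceIte]
      split_ifs <;> omega

variable {e A B}

theorem IntervalSupergraph.ofIndepSet_separates (hI : G.IsIndepSet I) (hA : A.Subsingleton)
    (hB : B.Subsingleton) {z v : V} (hz : z ∈ I) (hv : v ∈ I ∨ v ∈ A ∨ v ∈ B) (hzv : z ≠ v)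
    (hnadj : ¬G.Adj z v) : (ofIndepSet e A B hI hA hB).Separates z v := by
  simp only [Separates, ofIndepSet, hz, ↓reduceIte]
  by_cases hvI : v ∈ I
  · have := (blockPos_injective (G := G) (e := e) (A := A) (B := B)).ne hzv
    simp only [hvI, ↓reduceIte]
    omega
  simp only [hvI, ↓reduceIte]
  split_ifs with hvA hvB
  · have := (blockPos_mem_iff_forall_adj_left (G := G) (e := e) (B := B) z).not.2
      fun h => hnadj (h v hvA)
    omega
  · have := (blockPos_mem_iff_forall_adj_right (G := G) (e := e) (A := A) z).not.2
      fun h => hnadj (h v hvB)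
    omega
  · tauto

end IndepSet

theorem NonEdgesSeparable.insert_insert_of_not_adj {S : Set V} {k : ℕ} {u v : V}
    (h : G.NonEdgesSeparable S k) (huv : ¬G.Adj u v) :
    G.NonEdgesSeparable (insert u (insert v S)) (k + 1) :=
  h.cons (.ofNonAdj huv) fun x hx _ _ hxS hxy hnadj =>
    IntervalSupergraph.ofNonAdj_separates huv hxy hnadj (by simp_all)

theorem NonEdgesSeparable.insert_insert_union_of_isClique [Fintype V] {S I : Set V} {k : ℕ}
    {a b : V} (h : G.NonEdgesSeparable (S ∪ I) k) (hI : G.IsIndepSet I)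
    (hclique : G.IsClique (insert a (insert b S))) :
    G.NonEdgesSeparable (insert a (insert b S) ∪ I) (k + 1) := by
  let F := IntervalSupergraph.ofIndepSet (Fintype.equivFin V).toEmbedding {a} {b} hI
    Set.subsingleton_singleton Set.subsingleton_singleton
  refine h.cons F fun x hx y hy hxS hxy hnadj => ?_
  have hyI : y ∈ I := hy.resolve_left fun hyS =>
    hnadj (hclique (hx.resolve_right fun hxI => hxS (.inr hxI)) hyS hxy)
  refine (IntervalSupergraph.ofIndepSet_separates hI _ _ hyI ?_ hxy.symm
    fun h => hnadj h.symm).symm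
  simp only [Set.mem_union, Set.mem_insert_iff, Set.mem_singleton_iff] at hx hxS ⊢
  tauto

theorem nonEdgesSeparable_union_of_subsingleton [Fintype V] {S I : Set V}
    (hI : G.IsIndepSet I) (hS : S.Subsingleton) : G.NonEdgesSeparable (S ∪ I) 1 := by
  let F := IntervalSupergraph.ofIndepSet (Fintype.equivFin V).toEmbedding S ∅ hI hS
    Set.subsingleton_empty
  refine NonEdgesSeparable.cons (S := ∅) ⟨Fin.elim0, by simp⟩ F fun x hx y hy _ hxy hnadj => ?_
  by_cases hxI : x ∈ I
  · exact IntervalSupergraph.ofIndepSet_separates hI _ _ hxI (hy.symm.imp_right .inl) hxy hnadj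
  have hxS : x ∈ S := hx.resolve_right hxI
  have hyI : y ∈ I := hy.resolve_left fun hyS => hxy (hS hxS hyS)
  exact (IntervalSupergraph.ofIndepSet_separates hI _ _ hyI (.inr (.inl hxS)) hxy.symm
    fun h => hnadj h.symm).symm

open Finset

theorem exists_nonEdgesSeparable_union_indepSet [Fintype V] [DecidableEq V] {I : Finset V}
    (hI : G.IsIndepSet I) (S : Finset V) :
    ∃ k, 2 * k ≤ #S + 2 ∧ G.NonEdgesSeparable ↑(S ∪ I) k := by
  induction S using Finset.strongInduction with
  | H S ih =>
  have ih_erase_erase : ∀ {u v}, u ∈ S → v ∈ S → u ≠ v →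
      insert u (insert v ((S.erase u).erase v)) = S ∧
        ∃ k, 2 * k ≤ #S ∧ G.NonEdgesSeparable ↑((S.erase u).erase v ∪ I) k := by
    intro u v hu hv huv
    have hv' : v ∈ S.erase u := mem_erase.2 ⟨huv.symm, hv⟩
    obtain ⟨k, hk, hsep⟩ := ih _ ((erase_subset _ _).trans_ssubset (erase_ssubset hu))
    have := card_erase_add_one hv'
    have := card_erase_add_one hu
    exact ⟨by rw [insert_erase hv', insert_erase hu], k, by omega, hsep⟩
  by_cases hclique : G.IsClique (S : Set V)
  swap
  · obtain ⟨u, hu, v, hv, huv, hnadj⟩ : ∃ u ∈ S, ∃ v ∈ S, u ≠ v ∧ ¬G.Adj u v := by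
      simpa [IsClique, Set.Pairwise] using hclique
    obtain ⟨hS, k, hk, hsep⟩ := ih_erase_erase hu hv huv
    refine ⟨k + 1, by omega, ?_⟩
    rw [← hS, insert_union, insert_union, coe_insert, coe_insert]
    exact hsep.insert_insert_of_not_adj hnadj
  by_cases hbig : 1 < #S
  · obtain ⟨a, ha, b, hb, hab⟩ := one_lt_card.1 hbig
    obtain ⟨hS, k, hk, hsep⟩ := ih_erase_erase ha hb hab
    refine ⟨k + 1, by omega, ?_⟩
    rw [coe_union] at hsep
    rw [← hS, coe_insert, coe_insert] at hclique
    rw [← hS, coe_union, coe_insert, coe_insert]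
    exact hsep.insert_insert_union_of_isClique hI hclique
  exact ⟨1, by omega, coe_union S I ▸ nonEdgesSeparable_union_of_subsingleton hI
    fun x hx y hy => card_le_one.1 (by omega) x hx y hy⟩

variable [Fintype V]

theorem two_mul_boxicity_add_card_le [DecidableEq V] {I : Finset V} (hI : G.IsIndepSet I) :
    2 * boxicity G + #I ≤ Fintype.card V + 2 := by
  obtain ⟨k, hk, hsep⟩ := exists_nonEdgesSeparable_union_indepSet hI Iᶜ
  rw [union_comm, union_compl, coe_univ] at hsep
  have hbox : boxicity G ≤ k := Nat.sInf_le (hasBoxRep_of_nonEdgesSeparable hsep)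
  have := card_compl_add_card I
  omega

theorem Colorable.card_le_mul_indepNum {c : ℕ} (h : G.Colorable c) :
    Fintype.card V ≤ c * G.indepNum := by
  classical
  obtain ⟨C⟩ := h
  rw [mul_comm, ← card_univ, ← Fintype.card_fin c, ← card_univ]
  refine card_le_mul_card_image_of_maps_to (fun v _ => mem_univ (C v)) _ fun i _ => ?_
  refine IsIndepSet.card_le_indepNum fun x hx y hy _ => ?_
  simp only [coe_filter, mem_univ, true_and] at hx hy
  exact C.not_adj_of_mem_colorClass hx hy

end SimpleGraph

/-- Chandran–Das–Shah: if `box(G) = n/2 - s` with `s ≥ 0`, then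
`χ(G) ≥ n/(2s+2)`, where `n` is the number of vertices of `G`. -/
theorem chromatic_ge_of_large_boxicity {V : Type*} [Fintype V] (G : SimpleGraph V)
    (s : ℕ) (h : (boxicity G : ℝ) = (Fintype.card V : ℝ) / 2 - s) :
    (Fintype.card V : ℝ) / (2 * s + 2) ≤ (G.chromaticNumber.toNat : ℝ) := by
  classical
  obtain ⟨I, hI⟩ := G.exists_isNIndepSet_indepNum
  have hbox : (2 * boxicity G + G.indepNum : ℝ) ≤ Fintype.card V + 2 := by
    exact_mod_cast hI.card_eq ▸ two_mul_boxicity_add_card_le hI.isIndepSet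
  have hα : (G.indepNum : ℝ) ≤ 2 * s + 2 := by linarith
  have hn : (Fintype.card V : ℝ) ≤ G.chromaticNumber.toNat * G.indepNum := by
    exact_mod_cast G.colorable_chromaticNumber_of_fintype.card_le_mul_indepNum
  rw [div_le_iff₀ (by positivity)]
  calc (Fintype.card V : ℝ) ≤ G.chromaticNumber.toNat * G.indepNum := hn
    _ ≤ G.chromaticNumber.toNat * (2 * s + 2) := by gcongr
end
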